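/- Let α > 0, n ≥ 1 and K ≥ 1. Then there exists a constant β_0 = β_0(n,α,K) such that for every axis-parallel cube Q ⊂ ℝ^n with center c_Q and side length ℓ(Q) satisfying ℓ(Q) ≤ K·|c_Q|^{1−α} and |c_Q|^{min(α,1)} ≥ 6√n·K, one has μ_{−α}(3Q) ≤ β_0·μ_{−α}(Q), where 3Q is the cube with the same center and side length 3ℓ(Q). -/

import Mathlib

/-!
Write `R = |c_Q|` and `δ = 3√n ℓ(Q)/2`, the half-diagonal of `3Q`. Every point of `3Q` has norm
in `[R - δ, R + δ]`, so the density `e^{-|x|^α}` varies on `3Q` by a factor at most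
`exp ((R + δ)^α - (R - δ)^α)`, whence
`μ_{-α}(3Q) ≤ 3ⁿ exp ((R + δ)^α - (R - δ)^α) μ_{-α}(Q)`.
The hypotheses give `δ ≤ R/4` and `R^{α-1} δ ≤ 3√n K/2`; rescaling by `R` and using that
`t ↦ t^α` is Lipschitz on `[3/4, 5/4]` bounds the oscillation by a constant times `R^{α-1} δ`.
-/

open MeasureTheory ENNReal

/-- The measure `dμ_{-α}(x) = e^{-|x|^α} dx` on `ℝⁿ`. -/
noncomputable def muNegAlpha (n : ℕ) (α : ℝ) : Measure (EuclideanSpace ℝ (Fin n)) :=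
  volume.withDensity fun x => ENNReal.ofReal (Real.exp (-(‖x‖ ^ α)))

/-- The axis-parallel cube with center `c` and side length `ℓ`. -/
def cubeC (n : ℕ) (c : EuclideanSpace ℝ (Fin n)) (ℓ : ℝ) :
    Set (EuclideanSpace ℝ (Fin n)) :=
  {x | ∀ i, |x i - c i| ≤ ℓ / 2}

open Set Real

theorem exists_rpow_add_sub_rpow_sub_le (α : ℝ) :
    ∃ C : ℝ, 0 ≤ C ∧ ∀ R δ : ℝ, 0 < R → 0 ≤ δ → δ ≤ R / 4 →
      (R + δ) ^ α - (R - δ) ^ α ≤ C * (R ^ (α - 1) * δ) := by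
  obtain ⟨L, hL⟩ : ∃ L, LipschitzOnWith L (fun x : ℝ => x ^ α) (Icc (3 / 4) (5 / 4)) :=
    ContDiffOn.exists_lipschitzOnWith (n := 1)
      (fun x hx => (contDiffAt_rpow_const_of_ne (by linarith [hx.1])).contDiffWithinAt)
      one_ne_zero (convex_Icc _ _) isCompact_Icc
  refine ⟨2 * L, by positivity, fun R δ hR hδ hδR => ?_⟩
  set t := δ / R
  have hRt : R * t = δ := mul_div_cancel₀ δ hR.ne'
  have ht : t ≤ 1 / 4 := by rwa [div_le_iff₀ hR, div_mul_eq_mul_div, one_mul]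
  have ht0 : 0 ≤ t := div_nonneg hδ hR.le
  have hLip : (1 + t) ^ α - (1 - t) ^ α ≤ L * (2 * t) := by
    have := hL.dist_le_mul (1 + t) ⟨by linarith, by linarith⟩
      (1 - t) ⟨by linarith, by linarith⟩
    rw [dist_eq, dist_eq, show 1 + t - (1 - t) = 2 * t by ring,
      abs_of_nonneg (by linarith : 0 ≤ 2 * t)] at this
    exact (le_abs_self _).trans this
  calc (R + δ) ^ α - (R - δ) ^ α
      = R ^ α * ((1 + t) ^ α - (1 - t) ^ α) := by
        rw [← hRt, ← mul_one_add, ← mul_one_sub, mul_rpow hR.le (by linarith),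
          mul_rpow hR.le (by linarith), mul_sub]
    _ ≤ R ^ α * (L * (2 * t)) := by gcongr
    _ = 2 * L * (R ^ (α - 1) * δ) := by
        rw [rpow_sub_one hR.ne']
        ring

section Cubes

variable {n : ℕ}

theorem cubeC_eq_preimage (c : EuclideanSpace ℝ (Fin n)) (ℓ : ℝ) :
    cubeC n c ℓ = (MeasurableEquiv.toLp 2 (Fin n → ℝ)).symm ⁻¹'
      univ.pi fun i => Icc (c i - ℓ / 2) (c i + ℓ / 2) := by
  ext x
  simp only [cubeC, mem_ofPred_eq, mem_preimage, mem_univ_pi, mem_Icc,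
    MeasurableEquiv.toLp_symm_apply, abs_le]
  refine forall_congr' fun i => ?_
  constructor <;> rintro ⟨h₁, h₂⟩ <;> constructor <;> linarith

theorem volume_cubeC (c : EuclideanSpace ℝ (Fin n)) (ℓ : ℝ) :
    volume (cubeC n c ℓ) = ENNReal.ofReal ℓ ^ n := by
  rw [cubeC_eq_preimage, (EuclideanSpace.volume_preserving_symm_measurableEquiv_toLp (Fin n))
    |>.measure_preimage (MeasurableSet.univ_pi fun _ => measurableSet_Icc).nullMeasurableSet,
    volume_pi_pi]
  simp [Real.volume_Icc]

theorem norm_sub_le_of_mem_cubeC {c x : EuclideanSpace ℝ (Fin n)} {ℓ : ℝ} (hℓ : 0 ≤ ℓ)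
    (hx : x ∈ cubeC n c ℓ) : ‖x - c‖ ≤ √n * ℓ / 2 := by
  have hsum : ∑ i, ‖(x - c) i‖ ^ 2 ≤ n * (ℓ / 2) ^ 2 := by
    calc ∑ i, ‖(x - c) i‖ ^ 2 ≤ ∑ _i : Fin n, (ℓ / 2) ^ 2 :=
          Finset.sum_le_sum fun i _ => by
            simpa [Real.norm_eq_abs, sq_abs] using pow_le_pow_left₀ (abs_nonneg _) (hx i) 2
      _ = n * (ℓ / 2) ^ 2 := by simp
  calc ‖x - c‖ ≤ √(n * (ℓ / 2) ^ 2) := by rw [EuclideanSpace.norm_eq]; exact sqrt_le_sqrt hsum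
    _ = √n * ℓ / 2 := by rw [sqrt_mul n.cast_nonneg, sqrt_sq (by positivity), mul_div_assoc]

end Cubes

section Density

variable {n : ℕ} {α : ℝ}

theorem muNegAlpha_apply (s : Set (EuclideanSpace ℝ (Fin n))) :
    muNegAlpha n α s = ∫⁻ x in s, ENNReal.ofReal (exp (-(‖x‖ ^ α))) :=
  withDensity_apply' _ s

theorem muNegAlpha_le_of_le_norm (hα : 0 ≤ α) {s : Set (EuclideanSpace ℝ (Fin n))} {a : ℝ}
    (ha : 0 ≤ a) (h : ∀ x ∈ s, a ≤ ‖x‖) :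
    muNegAlpha n α s ≤ ENNReal.ofReal (exp (-(a ^ α))) * volume s := by
  rw [muNegAlpha_apply, ← setLIntegral_const]
  refine setLIntegral_mono measurable_const fun x hx => ?_
  gcongr
  exact h x hx

theorem le_muNegAlpha_of_norm_le (hα : 0 ≤ α) {s : Set (EuclideanSpace ℝ (Fin n))} {b : ℝ}
    (h : ∀ x ∈ s, ‖x‖ ≤ b) :
    ENNReal.ofReal (exp (-(b ^ α))) * volume s ≤ muNegAlpha n α s := by
  rw [muNegAlpha_apply, ← setLIntegral_const]
  refine setLIntegral_mono (by fun_prop) fun x hx => ?_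
  gcongr
  exact h x hx

theorem muNegAlpha_cubeC_three_mul_le (hα : 0 ≤ α) {c : EuclideanSpace ℝ (Fin n)}
    {ℓ : ℝ} (hℓ : 0 ≤ ℓ) (hc : 3 * √n * ℓ / 2 ≤ ‖c‖) :
    muNegAlpha n α (cubeC n c (3 * ℓ)) ≤
      ENNReal.ofReal (3 ^ n * exp ((‖c‖ + 3 * √n * ℓ / 2) ^ α - (‖c‖ - 3 * √n * ℓ / 2) ^ α)) *
        muNegAlpha n α (cubeC n c ℓ) := by
  set δ := 3 * √n * ℓ / 2
  have hnorm : ∀ x ∈ cubeC n c (3 * ℓ), |‖x‖ - ‖c‖| ≤ δ := fun x hx =>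
    (abs_norm_sub_norm_le x c).trans <|
      (norm_sub_le_of_mem_cubeC (by positivity) hx).trans_eq (by ring)
  have hsub : cubeC n c ℓ ⊆ cubeC n c (3 * ℓ) := fun x hx i => (hx i).trans (by linarith)
  have hexp : exp (-(‖c‖ - δ) ^ α) =
      exp ((‖c‖ + δ) ^ α - (‖c‖ - δ) ^ α) * exp (-(‖c‖ + δ) ^ α) := by
    rw [← exp_add]
    ring_nf
  calc muNegAlpha n α (cubeC n c (3 * ℓ))
      ≤ ENNReal.ofReal (exp (-(‖c‖ - δ) ^ α)) * volume (cubeC n c (3 * ℓ)) :=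
        muNegAlpha_le_of_le_norm hα (by linarith) fun x hx => by
          linarith [(abs_le.1 (hnorm x hx)).1]
    _ = ENNReal.ofReal (3 ^ n * exp ((‖c‖ + δ) ^ α - (‖c‖ - δ) ^ α)) *
          (ENNReal.ofReal (exp (-(‖c‖ + δ) ^ α)) * volume (cubeC n c ℓ)) := by
        rw [volume_cubeC, volume_cubeC, hexp, ENNReal.ofReal_mul (by positivity),
          ENNReal.ofReal_mul (by positivity), ENNReal.ofReal_mul (by norm_num), mul_pow,
          ENNReal.ofReal_pow (by norm_num)]
        ring
    _ ≤ _ := by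
        gcongr
        exact le_muNegAlpha_of_norm_le hα fun x hx => by
          linarith [(abs_le.1 (hnorm x (hsub hx))).2]

end Density

/-- admissible cubes are `(3,β₀)`-doubling for `μ_{-α}`.  For all
`α > 0`, `n ≥ 1`, `K ≥ 1` there is `β₀ = β₀(n,α,K)` such that every cube `Q` with center
`c_Q`, side length `ℓ(Q) ≤ K|c_Q|^{1-α}` and `|c_Q|^{min(α,1)} ≥ 6√n·K` satisfies
`μ_{-α}(3Q) ≤ β₀ μ_{-α}(Q)`. -/
theorem statement17 (α : ℝ) (hα : 0 < α) (n : ℕ) (hn : 1 ≤ n) (K : ℝ) (hK : 1 ≤ K) :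
    ∃ β₀ : ℝ, 0 < β₀ ∧ ∀ (c : EuclideanSpace ℝ (Fin n)) (ℓ : ℝ), 0 < ℓ →
      ℓ ≤ K * ‖c‖ ^ (1 - α) → 6 * Real.sqrt n * K ≤ ‖c‖ ^ min α 1 →
      muNegAlpha n α (cubeC n c (3 * ℓ))
        ≤ ENNReal.ofReal β₀ * muNegAlpha n α (cubeC n c ℓ) := by
  obtain ⟨C, hC₀, hC⟩ := exists_rpow_add_sub_rpow_sub_le α
  refine ⟨3 ^ n * exp (C * (3 * √n / 2 * K)), by positivity, fun c ℓ hℓ hℓK hcK => ?_⟩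
  set R := ‖c‖
  have hsqrt : 1 ≤ √n := one_le_sqrt.2 (by exact_mod_cast hn)
  have hR : 1 ≤ R := by
    by_contra! h
    have := rpow_le_one (norm_nonneg c) h.le (le_min hα.le zero_le_one)
    nlinarith
  have hRα : 6 * √n * K ≤ R ^ α := hcK.trans (rpow_le_rpow_of_exponent_le hR (min_le_left _ _))
  have hℓR : R ^ (α - 1) * ℓ ≤ K := by
    calc R ^ (α - 1) * ℓ ≤ R ^ (α - 1) * (K * R ^ (1 - α)) := by gcongr
      _ = K * R ^ (α - 1 + (1 - α)) := by rw [Real.rpow_add (by linarith)]; ring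
      _ = K := by simp
  have hδR : 3 * √n * ℓ / 2 ≤ R / 4 := by
    calc 3 * √n * ℓ / 2 ≤ 3 * √n * (K * R ^ (1 - α)) / 2 := by gcongr
      _ ≤ R ^ α * R ^ (1 - α) / 4 := by nlinarith [rpow_nonneg (norm_nonneg c) (1 - α)]
      _ = R / 4 := by rw [← Real.rpow_add (by linarith)]; simp
  refine (muNegAlpha_cubeC_three_mul_le hα.le hℓ.le (by linarith)).trans ?_
  gcongr
  calc _ ≤ C * (R ^ (α - 1) * (3 * √n * ℓ / 2)) := hC R _ (by linarith) (by positivity) hδR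
    _ = C * (3 * √n / 2 * (R ^ (α - 1) * ℓ)) := by ring
    _ ≤ C * (3 * √n / 2 * K) := by gcongr
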